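/- There is a constant C > 0 such that for all L ≥ r ≥ 1 (in fact for all 0 < r ≤ L with r ≥ 1), all z ∈ [0, L − r] and all m, l ∈ ℕ₀: |b_{m,l}^z| ≤ C · √(r/L) · (1 + |r m / L − l|)^{−1}. -/

import Mathlib

/-!
Writing `cos(α(x+z)) cos(βx)` as half the sum of `cos((α ∓ β)x + αz)` splits `b_{m,l}^z` into two
oscillatory integrals over `[0, r]`. Each is bounded both by the length `r` and by `2/|a|`, where
`a` is its frequency; for `α = πm/L`, `β = πl/r` the smaller frequency satisfies
`|α - β| r = π |rm/L - l|`, which gives the factor `(1 + |rm/L - l|)⁻¹`. The normalisations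
contribute `√(2/L) √(2/r) r = 2 √(r/L)`.
-/

open MeasureTheory Real

/-- `ν_k = 1` for `k ≥ 1` and `ν₀ = 2^{−1/2}`. -/
noncomputable def nu (k : ℕ) : ℝ := if k = 0 then 1 / Real.sqrt 2 else 1

/-- The Neumann basis function `𝔫_{k,s}(x) = ν_k √(2/s) cos(π k x / s)` on `[0,s]`. -/
noncomputable def nfun (s : ℝ) (k : ℕ) (x : ℝ) : ℝ :=
  nu k * Real.sqrt (2 / s) * Real.cos (π * (k : ℝ) * x / s)

/-- `b_{m,l}^z = ∫₀^r 𝔫_{m,L}(x + z) 𝔫_{l,r}(x) dx`. -/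
noncomputable def bcoef (L r z : ℝ) (m l : ℕ) : ℝ :=
  ∫ x in Set.Icc (0 : ℝ) r, nfun L m (x + z) * nfun r l x

lemma nu_nonneg (k : ℕ) : 0 ≤ nu k := by
  unfold nu; split <;> positivity

lemma nu_le_one (k : ℕ) : nu k ≤ 1 := by
  unfold nu; split
  · rw [div_le_one (by positivity)]
    exact one_le_sqrt.mpr one_le_two
  · exact le_rfl

lemma abs_integral_cos_affine_le_length (a b : ℝ) {r : ℝ} (hr : 0 ≤ r) :
    |∫ x in (0 : ℝ)..r, cos (a * x + b)| ≤ r := by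
  simpa [abs_of_nonneg hr] using intervalIntegral.norm_integral_le_of_norm_le_const (C := 1)
    (f := fun x => cos (a * x + b)) (a := 0) (b := r) fun x _ => abs_cos_le_one (a * x + b)

lemma abs_integral_cos_affine_le_two_div {a : ℝ} (b r : ℝ) (ha : a ≠ 0) :
    |∫ x in (0 : ℝ)..r, cos (a * x + b)| ≤ 2 / |a| := by
  rw [intervalIntegral.integral_comp_mul_add cos ha b, integral_cos, smul_eq_mul, abs_mul, abs_inv,
    div_eq_inv_mul]
  gcongr
  calc |sin (a * r + b) - sin (a * 0 + b)| ≤ |sin (a * r + b)| + |sin (a * 0 + b)| :=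
        abs_sub _ _
    _ ≤ 2 := by linarith [abs_sin_le_one (a * r + b), abs_sin_le_one (a * 0 + b)]

lemma abs_integral_cos_affine_le {a r D : ℝ} (b : ℝ) (hr : 0 ≤ r) (hD : 0 ≤ D)
    (hfreq : 2 * D ≤ |a| * r) :
    |∫ x in (0 : ℝ)..r, cos (a * x + b)| ≤ 2 * r / (1 + D) := by
  rcases le_or_gt D 1 with hD1 | hD1
  · calc |∫ x in (0 : ℝ)..r, cos (a * x + b)| ≤ r := abs_integral_cos_affine_le_length a b hr
      _ ≤ 2 * r / (1 + D) := by rw [le_div_iff₀ (by linarith)]; nlinarith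
  · have ha : 0 < |a| := by
      by_contra! h
      nlinarith [abs_nonneg a]
    calc |∫ x in (0 : ℝ)..r, cos (a * x + b)| ≤ 2 / |a| :=
          abs_integral_cos_affine_le_two_div b r (abs_pos.mp ha)
      _ ≤ 2 * r / (1 + D) := by rw [div_le_div_iff₀ ha (by linarith)]; nlinarith

lemma integral_cos_affine_mul_cos (α β γ r : ℝ) :
    ∫ x in (0 : ℝ)..r, cos (α * x + γ) * cos (β * x) =
      ((∫ x in (0 : ℝ)..r, cos ((α - β) * x + γ)) +
        ∫ x in (0 : ℝ)..r, cos ((α + β) * x + γ)) / 2 := by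
  rw [← intervalIntegral.integral_add ((by fun_prop : Continuous _).intervalIntegrable _ _)
    ((by fun_prop : Continuous _).intervalIntegrable _ _), ← intervalIntegral.integral_div]
  congr 1 with x
  rw [show (α - β) * x + γ = (α * x + γ) - β * x by ring,
    show (α + β) * x + γ = (α * x + γ) + β * x by ring]
  linear_combination -(cos_sub (α * x + γ) (β * x) + cos_add (α * x + γ) (β * x)) / 2

lemma abs_integral_cos_affine_mul_cos_le {α β r D : ℝ} (γ : ℝ) (hα : 0 ≤ α) (hβ : 0 ≤ β)
    (hr : 0 ≤ r) (hD : 0 ≤ D) (hfreq : 2 * D ≤ |α - β| * r) :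
    |∫ x in (0 : ℝ)..r, cos (α * x + γ) * cos (β * x)| ≤ 2 * r / (1 + D) := by
  have hsum : 2 * D ≤ |α + β| * r := by
    refine hfreq.trans (mul_le_mul_of_nonneg_right ?_ hr)
    rw [abs_of_nonneg (add_nonneg hα hβ)]
    exact abs_sub_le_iff.mpr ⟨by linarith, by linarith⟩
  rw [integral_cos_affine_mul_cos, abs_div, abs_two]
  linarith [abs_add_le (∫ x in (0 : ℝ)..r, cos ((α - β) * x + γ))
      (∫ x in (0 : ℝ)..r, cos ((α + β) * x + γ)),
    abs_integral_cos_affine_le γ hr hD hfreq, abs_integral_cos_affine_le γ hr hD hsum]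

lemma nfun_eq_mul_cos (s : ℝ) (k : ℕ) (x : ℝ) :
    nfun s k x = nu k * √(2 / s) * cos (π * k / s * x) := by
  rw [nfun, mul_div_right_comm]

lemma bcoef_eq_mul_integral (L : ℝ) {r : ℝ} (z : ℝ) (m l : ℕ) (hr : 0 ≤ r) :
    bcoef L r z m l = nu m * nu l * (√(2 / L) * √(2 / r)) *
      ∫ x in (0 : ℝ)..r, cos (π * m / L * x + π * m / L * z) * cos (π * l / r * x) := by
  rw [bcoef, integral_Icc_eq_integral_Ioc, ← intervalIntegral.integral_of_le hr,
    ← intervalIntegral.integral_const_mul]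
  congr 1 with x
  rw [nfun_eq_mul_cos, nfun_eq_mul_cos, mul_add]
  ring

lemma sqrt_two_div_mul_sqrt_two_div_mul_self {L r : ℝ} (hr : 0 < r) :
    √(2 / L) * √(2 / r) * r = 2 * √(r / L) := by
  calc √(2 / L) * √(2 / r) * r = √(2 / L * (2 / r) * r ^ 2) := by
        rw [sqrt_mul' _ (sq_nonneg r), sqrt_mul' _ (by positivity), sqrt_sq hr.le]
    _ = √(2 ^ 2 * (r / L)) := by congr 1; field_simp
    _ = 2 * √(r / L) := by rw [sqrt_mul (sq_nonneg 2), sqrt_sq zero_le_two]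

/-- There is `C > 0` such that for all `L ≥ r ≥ 1`, `z ∈ [0, L − r]` and `m, l ∈ ℕ₀`:
`|b_{m,l}^z| ≤ C √(r/L) (1 + |rm/L − l|)⁻¹`. -/
theorem bcoef_bound :
    ∃ C : ℝ, 0 < C ∧ ∀ (L r z : ℝ) (m l : ℕ),
      1 ≤ r → r ≤ L → z ∈ Set.Icc 0 (L - r) →
      |bcoef L r z m l| ≤ C * Real.sqrt (r / L) * (1 + |r * (m : ℝ) / L - (l : ℝ)|)⁻¹ := by
  refine ⟨4, by norm_num, fun L r z m l hr hrL _ => ?_⟩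
  have hr0 : 0 < r := by linarith
  have hL0 : 0 < L := by linarith
  set D := |r * (m : ℝ) / L - l|
  have hfreq : 2 * D ≤ |π * m / L - π * l / r| * r := by
    calc 2 * D ≤ π * D := mul_le_mul_of_nonneg_right two_le_pi (abs_nonneg _)
      _ = |π * (r * m / L - l)| := by rw [abs_mul, abs_of_pos pi_pos]
      _ = |(π * m / L - π * l / r) * r| := by congr 1; field_simp
      _ = |π * m / L - π * l / r| * r := by rw [abs_mul, abs_of_pos hr0]
  have hamp : nu m * nu l ≤ 1 := mul_le_one₀ (nu_le_one m) (nu_nonneg l) (nu_le_one l)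
  calc |bcoef L r z m l|
      = nu m * nu l * (√(2 / L) * √(2 / r)) *
          |∫ x in (0 : ℝ)..r, cos (π * m / L * x + π * m / L * z) * cos (π * l / r * x)| := by
        rw [bcoef_eq_mul_integral L z m l hr0.le, abs_mul,
          abs_of_nonneg (by have := nu_nonneg m; have := nu_nonneg l; positivity)]
    _ ≤ 1 * (√(2 / L) * √(2 / r)) * (2 * r / (1 + D)) := by
        gcongr
        exact abs_integral_cos_affine_mul_cos_le _ (by positivity) (by positivity) hr0.le
          (abs_nonneg _) hfreq
    _ = 2 * (√(2 / L) * √(2 / r) * r) * (1 + D)⁻¹ := by ring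
    _ = 4 * √(r / L) * (1 + D)⁻¹ := by
        rw [sqrt_two_div_mul_sqrt_two_div_mul_self hr0]
        ring
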